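/- Let a₋, a₊ > 0 and set δ = 2(a₊ − a₋)/(a₊ + a₋). For δ₃ ∈ ℝ, let (ε₁, ε₃) be the unique pair of reals satisfying ε₃ − ε₁ = δ₃ and a₋·h(ε₁) + a₊·h(ε₃) = a₋·h(δ₃). Then |ε₃ − δ₃| = |ε₁| ≤ |δ₃|·|δ|/2. -/

import Mathlib

/-!
Dividing the balance law by `(a₊ + a₋) / 2` turns the weights into `1 - d, 1 + d` with
`d = δ / 2`, `|d| < 1`. Then `ε₁` is where the strictly increasing map
`e ↦ (1 - d) h(e) + (1 + d) h(δ₃ + e)` takes the value `(1 - d) h(δ₃)`, so it suffices to compare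
the map with that value at `e = ±|δ₃| |d|`. For `δ₃ ≥ 0` this needs only `t ≤ sinh t` for `t ≥ 0`. For
`δ₃ < 0`, two of the four sign cases follow from monotonicity of `sinh`; the other two are
inequalities between `sinh`s of multiples of `|δ₃|` whose difference vanishes at `0` and has
nonnegative derivative by convexity of `cosh`.
-/

/-- The function `h` from the paper: `h ε = ε` if `ε ≥ 0`, `h ε = sinh ε` otherwise. -/
noncomputable def hFun (ε : ℝ) : ℝ := if 0 ≤ ε then ε else Real.sinh ε

open Real

lemma hFun_of_nonneg {x : ℝ} (hx : 0 ≤ x) : hFun x = x := if_pos hx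

lemma hFun_neg {u : ℝ} (hu : 0 ≤ u) : hFun (-u) = -sinh u := by
  rcases hu.eq_or_lt with rfl | hu
  · simp [hFun]
  · simp [hFun, hu, sinh_neg]

lemma hFun_strictMono : StrictMono hFun := by
  intro x y hxy
  unfold hFun
  split_ifs with hx hy hy
  · exact hxy
  · exact absurd (hx.trans hxy.le) hy
  · calc sinh x < sinh 0 := sinh_lt_sinh.mpr (not_le.mp hx)
      _ = 0 := sinh_zero
      _ ≤ y := hy
  · exact sinh_lt_sinh.mpr hxy

lemma convexOn_cosh : ConvexOn ℝ Set.univ cosh := by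
  refine ⟨convex_univ, fun x _ y _ a b ha hb hab => ?_⟩
  have hpos := convexOn_exp.2 (Set.mem_univ x) (Set.mem_univ y) ha hb hab
  have hneg := convexOn_exp.2 (Set.mem_univ (-x)) (Set.mem_univ (-y)) ha hb hab
  simp only [smul_eq_mul, cosh_eq] at *
  rw [show -(a * x + b * y) = a * -x + b * -y by ring]
  linarith

lemma hasDerivAt_sinh_const_mul (k x : ℝ) :
    HasDerivAt (fun x => sinh (k * x)) (k * cosh (k * x)) x := by
  simpa [mul_comm] using ((hasDerivAt_id x).const_mul k).sinh

lemma one_add_mul_sinh_one_sub_mul_le {c u : ℝ} (hc₀ : 0 ≤ c) (hc₁ : c ≤ 1) (hu : 0 ≤ u) :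
    (1 + c) * sinh ((1 - c) * u) ≤ (1 - c) * (c * u + sinh u) := by
  let f x := (1 - c) * (c * x + sinh x) - (1 + c) * sinh ((1 - c) * x)
  let f' x := (1 - c) * (c + cosh x - (1 + c) * cosh ((1 - c) * x))
  have hf x : HasDerivAt f (f' x) x :=
    (((((hasDerivAt_id x).const_mul c).add (hasDerivAt_sinh x)).const_mul (1 - c)).sub
      ((hasDerivAt_sinh_const_mul (1 - c) x).const_mul (1 + c))).congr_deriv (by simp [f']; ring)
  have hf' : 0 ≤ f' := fun x => by
    -- `(1 - c) x` is the convex combination of `x` and `0` with weights `1 - c` and `c`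
    have hconv : cosh ((1 - c) * x) ≤ (1 - c) * cosh x + c := by
      simpa using convexOn_cosh.2 (Set.mem_univ x) (Set.mem_univ 0) (by linarith) hc₀ (by ring)
    refine mul_nonneg (by linarith) ?_
    nlinarith [one_le_cosh x, mul_nonneg (sq_nonneg c) (sub_nonneg.2 (one_le_cosh x))]
  have := monotone_of_hasDerivAt_nonneg hf hf' hu
  simp only [f, mul_zero, add_zero, sinh_zero, sub_zero] at this
  linarith

lemma one_add_mul_sinh_le {c u : ℝ} (hc₀ : 0 ≤ c) (hc₁ : c ≤ 1) (hu : 0 ≤ u) :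
    (1 + c) * sinh u ≤ (1 + c) * sinh (c * u) + (1 - c) * sinh ((1 + c) * u) := by
  let f x := (1 + c) * sinh (c * x) + (1 - c) * sinh ((1 + c) * x) - (1 + c) * sinh x
  let f' x := (1 + c) * (c * cosh (c * x) + (1 - c) * cosh ((1 + c) * x) - cosh x)
  have hf x : HasDerivAt f (f' x) x :=
    ((((hasDerivAt_sinh_const_mul c x).const_mul (1 + c)).add
      ((hasDerivAt_sinh_const_mul (1 + c) x).const_mul (1 - c))).sub
      ((hasDerivAt_sinh x).const_mul (1 + c))).congr_deriv (by simp [f']; ring)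
  have hf' : 0 ≤ f' := fun x => by
    have hconv := convexOn_cosh.2 (Set.mem_univ (c * x)) (Set.mem_univ ((1 + c) * x)) hc₀
      (by linarith) (by ring : c + (1 - c) = 1)
    rw [show c • (c * x) + (1 - c) • ((1 + c) * x) = x by simp only [smul_eq_mul]; ring] at hconv
    exact mul_nonneg (by linarith) (by simpa using hconv)
  have := monotone_of_hasDerivAt_nonneg hf hf' hu
  simp only [f, mul_zero, sinh_zero, add_zero, sub_zero] at this
  linarith

noncomputable def interactionMap (d x e : ℝ) : ℝ := (1 - d) * hFun e + (1 + d) * hFun (x + e)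

lemma interactionMap_strictMono {d : ℝ} (hd : |d| < 1) (x : ℝ) :
    StrictMono (interactionMap d x) := by
  obtain ⟨hd₁, hd₂⟩ := abs_lt.mp hd
  intro e e' he
  exact add_lt_add (mul_lt_mul_of_pos_left (hFun_strictMono he) (by linarith))
    (mul_lt_mul_of_pos_left (hFun_strictMono (by linarith)) (by linarith))

lemma le_interactionMap_abs_mul_abs {d : ℝ} (hd : |d| ≤ 1) (x : ℝ) :
    (1 - d) * hFun x ≤ interactionMap d x (|x| * |d|) := by
  obtain ⟨hd₁, hd₂⟩ := abs_le.mp hd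
  rw [interactionMap, hFun_of_nonneg (x := |x| * |d|) (by positivity)]
  rcases le_or_gt 0 x with hx | hx
  · rw [abs_of_nonneg hx, hFun_of_nonneg hx, hFun_of_nonneg (by positivity)]
    nlinarith [neg_abs_le d]
  · obtain ⟨u, hu, rfl⟩ : ∃ u, 0 < u ∧ x = -u := ⟨-x, by linarith, by ring⟩
    rw [abs_neg, abs_of_pos hu, hFun_neg hu.le,
      show -u + u * |d| = -((1 - |d|) * u) by ring, hFun_neg (by nlinarith)]
    rcases le_or_gt 0 d with hd₀ | hd₀
    · rw [abs_of_nonneg hd₀]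
      nlinarith [one_add_mul_sinh_one_sub_mul_le hd₀ hd₂ hu.le]
    · rw [abs_of_neg hd₀]
      have hsinh : sinh ((1 - -d) * u) ≤ sinh u := sinh_le_sinh.mpr (by nlinarith)
      have hsinh₀ : 0 ≤ sinh ((1 - -d) * u) := sinh_nonneg_iff.mpr (by nlinarith)
      nlinarith [mul_le_mul_of_nonneg_left hsinh (by linarith : 0 ≤ 1 - d),
        mul_nonneg (by linarith : 0 ≤ -d) hsinh₀, mul_nonneg (by linarith : 0 ≤ 1 - d) hu.le]

lemma interactionMap_neg_abs_mul_abs_le {d : ℝ} (hd : |d| ≤ 1) (x : ℝ) :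
    interactionMap d x (-(|x| * |d|)) ≤ (1 - d) * hFun x := by
  obtain ⟨hd₁, hd₂⟩ := abs_le.mp hd
  rw [interactionMap, hFun_neg (u := |x| * |d|) (by positivity)]
  rcases le_or_gt 0 x with hx | hx
  · rw [abs_of_nonneg hx, hFun_of_nonneg hx, hFun_of_nonneg (by nlinarith)]
    have hsinh : x * |d| ≤ sinh (x * |d|) := self_le_sinh_iff.mpr (by positivity)
    nlinarith [le_abs_self d]
  · obtain ⟨u, hu, rfl⟩ : ∃ u, 0 < u ∧ x = -u := ⟨-x, by linarith, by ring⟩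
    rw [abs_neg, abs_of_pos hu, hFun_neg hu.le,
      show -u + -(u * |d|) = -((1 + |d|) * u) by ring, hFun_neg (by positivity)]
    rcases le_or_gt 0 d with hd₀ | hd₀
    · rw [abs_of_nonneg hd₀]
      have hsinh : sinh u ≤ sinh ((1 + d) * u) := sinh_le_sinh.mpr (by nlinarith)
      have hsinh₀ : 0 ≤ sinh u := sinh_nonneg_iff.mpr hu.le
      have hsinh₁ : 0 ≤ sinh (u * d) := sinh_nonneg_iff.mpr (by positivity)
      nlinarith
    · rw [abs_of_neg hd₀, mul_comm u]
      nlinarith [one_add_mul_sinh_le (neg_nonneg.mpr hd₀.le) (by linarith) hu.le]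

lemma abs_le_of_interactionMap_eq {d x e : ℝ} (hd : |d| < 1)
    (he : interactionMap d x e = (1 - d) * hFun x) : |e| ≤ |x| * |d| := by
  have hmono := interactionMap_strictMono hd x
  refine abs_le.mpr ⟨hmono.le_iff_le.mp ?_, hmono.le_iff_le.mp ?_⟩
  · exact he ▸ interactionMap_neg_abs_mul_abs_le hd.le x
  · exact he ▸ le_interactionMap_abs_mul_abs hd.le x

/-- Interaction estimate for the accurate solver `R_{LL}`: when a 3-wave of strength δ₃
crosses a phase interface of strength δ, the strength change of the transmitted wave
equals the size of the reflected wave and is bounded by |δ₃|·|δ|/2. -/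
theorem statement4 (aminus aplus : ℝ) (haminus : 0 < aminus) (haplus : 0 < aplus)
    (δ δ₃ ε₁ ε₃ : ℝ)
    (hδ : δ = 2 * (aplus - aminus) / (aplus + aminus))
    (h1 : ε₃ - ε₁ = δ₃)
    (h2 : aminus * hFun ε₁ + aplus * hFun ε₃ = aminus * hFun δ₃) :
    |ε₃ - δ₃| = |ε₁| ∧ |ε₁| ≤ |δ₃| * |δ| / 2 := by
  have hs : 0 < aplus + aminus := by linarith
  set d := (aplus - aminus) / (aplus + aminus) with hd_def
  have hd : |d| < 1 := by
    rw [abs_div, abs_of_pos hs, div_lt_one hs, abs_lt]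
    constructor <;> linarith
  have hbalance : interactionMap d δ₃ ε₁ = (1 - d) * hFun δ₃ := by
    rw [interactionMap, hd_def, show δ₃ + ε₁ = ε₃ by linarith]
    field_simp
    linear_combination 2 * h2
  have hδd : δ = 2 * d := by rw [hδ, hd_def]; ring
  refine ⟨congrArg abs (by linarith), ?_⟩
  calc |ε₁| ≤ |δ₃| * |d| := abs_le_of_interactionMap_eq hd hbalance
    _ = |δ₃| * |δ| / 2 := by rw [hδd, abs_mul, abs_two]; ring
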